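/- Let E be a finite-dimensional real normed vector space, A : E → E a continuous linear map, p ≥ 1 an integer, v₀, …, v_p ∈ E, and let y(t) = exp(tA)(v₀) + Σ_{k=1}^{p} t^k·φ_k(tA)(v_k). Then for all s ≥ 0 and τ ≥ 0 the following time-stepping relation holds: y(s + τ) = exp(τA)(y(s)) + Σ_{i=1}^{p} τ^i · φ_i(τA)( Σ_{j=0}^{p−i} (s^j/j!)·v_{i+j} ). -/

import Mathlib

/-!
Write `ψ_k(t) = t^k φ_k(tA)`. For `k ≥ 1` the substitution `σ = tθ` turns this into the
convolution `ψ_k(t) = ∫₀ᵗ σ^(k-1)/(k-1)! exp((t-σ)A) dσ`. Splitting the integral for `t = s + τ`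
at `σ = s`, the part over `[0, s]` is `exp(τA) ψ_k(s)`, while on `[s, s + τ]` the binomial
expansion of `(s + u)^(k-1)/(k-1)!` gives `∑_{i=1}^k s^(k-i)/(k-i)! ψ_i(τ)`; for `ψ_0 = exp(tA)`
the same identity holds with an empty sum. Applying it to `y(t) = ∑_k ψ_k(t) v_k` and exchanging
the two sums gives the time-stepping relation.
-/

open MeasureTheory intervalIntegral Finset

/-- The `φ`-functions of exponential integrators, for a continuous linear
endomorphism `A` of a finite-dimensional real normed vector space:
`φ₀(A) = exp(A)` and, for `k ≥ 1`,
`φ_k(A) = ∫₀¹ exp((1-θ)A) · θ^(k-1)/(k-1)! dθ`. -/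
noncomputable def phiOp {E : Type*} [NormedAddCommGroup E] [NormedSpace ℝ E]
    [FiniteDimensional ℝ E] : ℕ → (E →L[ℝ] E) → (E →L[ℝ] E)
  | 0, A => NormedSpace.exp A
  | (k + 1), A =>
      ∫ θ in (0:ℝ)..1, (θ ^ k / (k.factorial : ℝ)) • NormedSpace.exp ((1 - θ) • A)

open NormedSpace
open scoped Nat

theorem add_pow_div_factorial (s u : ℝ) (k : ℕ) :
    (s + u) ^ k / k ! = ∑ j ∈ range (k + 1), s ^ (k - j) / (k - j)! * (u ^ j / j !) := by
  rw [add_comm, add_pow, sum_div]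
  refine sum_congr rfl fun j hj => ?_
  rw [Nat.cast_choose ℝ (Nat.lt_succ_iff.mp (mem_range.mp hj))]
  field_simp

section BanachAlgebra

variable {𝔸 : Type*} [NormedRing 𝔸] [NormedAlgebra ℝ 𝔸] [CompleteSpace 𝔸] (a : 𝔸)

theorem exp_add_smul (s t : ℝ) : exp ((s + t) • a) = exp (s • a) * exp (t • a) := by
  -- `exp_add_of_commute` is stated for `ℚ`-algebras
  let +nondep : NormedAlgebra ℚ 𝔸 := .restrictScalars ℚ ℝ 𝔸
  rw [add_smul, exp_add_of_commute (((Commute.refl a).smul_left s).smul_right t)]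

theorem continuous_monomial_smul_exp (k : ℕ) (c : ℝ) :
    Continuous fun σ : ℝ => (σ ^ k / k !) • exp ((c - σ) • a) :=
  (continuous_pow k |>.div_const _).smul
    ((differentiable_exp_smul_const ℝ a).continuous.comp (continuous_sub_left c))

/-- `ψ_k(t) = t ^ k • φ_k(t • a)`, cf. `pow_smul_phiOp`. -/
noncomputable def phiFlow : ℕ → ℝ → 𝔸
  | 0, t => exp (t • a)
  | k + 1, t => ∫ σ in (0 : ℝ)..t, (σ ^ k / k !) • exp ((t - σ) • a)

theorem integral_monomial_smul_exp_add_left (k : ℕ) (s τ : ℝ) :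
    ∫ σ in (0 : ℝ)..s, (σ ^ k / k !) • exp ((s + τ - σ) • a)
      = exp (τ • a) * phiFlow a (k + 1) s := by
  have hsplit : ∀ σ : ℝ, (σ ^ k / k !) • exp ((s + τ - σ) • a)
      = ContinuousLinearMap.mul ℝ 𝔸 (exp (τ • a)) ((σ ^ k / k !) • exp ((s - σ) • a)) := by
    intro σ
    rw [show s + τ - σ = τ + (s - σ) by ring, exp_add_smul, map_smul,
      ContinuousLinearMap.mul_apply']
  simp only [hsplit, ContinuousLinearMap.intervalIntegral_comp_comm _
    ((continuous_monomial_smul_exp a k s).intervalIntegrable 0 s)]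
  rfl

theorem integral_monomial_smul_exp_add_right (k : ℕ) (s τ : ℝ) :
    ∫ σ in s..s + τ, (σ ^ k / k !) • exp ((s + τ - σ) • a)
      = ∑ j ∈ range (k + 1), (s ^ (k - j) / (k - j)!) • phiFlow a (j + 1) τ := by
  have hexpand : ∀ u : ℝ, ((s + u) ^ k / k !) • exp ((s + τ - (s + u)) • a)
      = ∑ j ∈ range (k + 1), (s ^ (k - j) / (k - j)!) • (u ^ j / j !) • exp ((τ - u) • a) := by
    intro u
    simp only [add_sub_add_left_eq_sub, add_pow_div_factorial, sum_smul, smul_smul]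
  have hshift := integral_comp_add_left (a := 0) (b := τ)
    (fun σ => (σ ^ k / k !) • exp ((s + τ - σ) • a)) s
  rw [add_zero] at hshift
  simp only [← hshift, hexpand]
  have hint : ∀ j ∈ range (k + 1), IntervalIntegrable
      (fun u => (s ^ (k - j) / (k - j)!) • (u ^ j / j !) • exp ((τ - u) • a)) volume 0 τ :=
    fun j _ => ((continuous_monomial_smul_exp a j τ).const_smul _).intervalIntegrable 0 τ
  rw [intervalIntegral.integral_finsetSum hint]
  simp only [intervalIntegral.integral_smul, phiFlow]

theorem phiFlow_add (k : ℕ) (s τ : ℝ) :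
    phiFlow a k (s + τ) = exp (τ • a) * phiFlow a k s
      + ∑ i ∈ Icc 1 k, (s ^ (k - i) / (k - i)!) • phiFlow a i τ := by
  cases k with
  | zero => simp [phiFlow, add_comm s τ, exp_add_smul]
  | succ k =>
    have hint (c b : ℝ) :=
      (continuous_monomial_smul_exp a k (s + τ)).intervalIntegrable (μ := volume) c b
    rw [phiFlow, ← integral_add_adjacent_intervals (hint 0 s) (hint s (s + τ)),
      integral_monomial_smul_exp_add_left, integral_monomial_smul_exp_add_right,
      ← Ico_add_one_right_eq_Icc, ← zero_add 1, ← sum_Ico_add', range_eq_Ico]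
    simp only [Nat.add_sub_add_right]

end BanachAlgebra

theorem pow_smul_phiOp {E : Type*} [NormedAddCommGroup E] [NormedSpace ℝ E]
    [FiniteDimensional ℝ E] (A : E →L[ℝ] E) (k : ℕ) (t : ℝ) : t ^ k • phiOp k (t • A) = phiFlow A k t := by
  cases k with
  | zero => simp [phiOp, phiFlow]
  | succ k =>
    have hscale : ∀ θ : ℝ, ((t * θ) ^ k / k !) • exp ((t - t * θ) • A)
        = t ^ k • (θ ^ k / k !) • exp ((1 - θ) • t • A) := by
      intro θ
      rw [smul_smul, smul_smul, mul_pow, mul_div_assoc, sub_mul, one_mul, mul_comm θ t]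
    have h := smul_integral_comp_mul_left (a := 0) (b := 1)
      (fun σ => (σ ^ k / k !) • exp ((t - σ) • A)) t
    rw [mul_zero, mul_one] at h
    simp only [phiFlow, ← h, hscale, intervalIntegral.integral_smul]
    rw [phiOp, smul_smul, pow_succ']

theorem sum_range_sum_Icc_eq_sum_Icc_sum_range {M : Type*} [AddCommMonoid M] (p : ℕ)
    (g : ℕ → ℕ → M) :
    ∑ k ∈ range (p + 1), ∑ i ∈ Icc 1 k, g i k
      = ∑ i ∈ Icc 1 p, ∑ j ∈ range (p - i + 1), g i (i + j) := by
  rw [sum_comm' (t' := Icc 1 p) (s' := fun i => Ico i (p + 1))]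
  · refine sum_congr rfl fun i hi => ?_
    rw [sum_Ico_eq_sum_range, Nat.sub_add_comm (mem_Icc.mp hi).2]
  · intro k i
    simp only [mem_range, mem_Icc, mem_Ico]
    omega

theorem phi_time_stepping_relation_general
    {E : Type*} [NormedAddCommGroup E] [NormedSpace ℝ E] [FiniteDimensional ℝ E]
    (A : E →L[ℝ] E) (p : ℕ) (v : ℕ → E)
    (y : ℝ → E)
    (hy : ∀ t : ℝ, y t = NormedSpace.exp (t • A) (v 0)
        + ∑ k ∈ Finset.Icc 1 p, t ^ k • phiOp k (t • A) (v k)) :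
    ∀ s τ : ℝ, 0 ≤ s → 0 ≤ τ →
      y (s + τ) = NormedSpace.exp (τ • A) (y s)
        + ∑ i ∈ Finset.Icc 1 p, τ ^ i •
            phiOp i (τ • A)
              (∑ j ∈ Finset.range (p - i + 1), (s ^ j / (j.factorial : ℝ)) • v (i + j)) := by
  intro s τ _ _
  have hphi (k : ℕ) (t : ℝ) (x : E) : t ^ k • phiOp k (t • A) x = phiFlow A k t x := by
    rw [← pow_smul_phiOp]; rfl
  have hflow (t : ℝ) : y t = ∑ k ∈ range (p + 1), phiFlow A k t (v k) := by
    rw [hy, range_eq_Ico, sum_eq_sum_Ico_succ_bot p.succ_pos, zero_add, Nat.succ_eq_add_one,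
      Ico_add_one_right_eq_Icc]
    simp only [hphi]
    rfl
  simp only [hflow, hphi]
  simp only [phiFlow_add, add_apply, mul_apply_eq_comp, _root_.sum_apply, smul_apply,
    sum_add_distrib, map_sum, map_smul]
  rw [sum_range_sum_Icc_eq_sum_Icc_sum_range]
  simp only [Nat.add_sub_cancel_left]

/-- Time-stepping relation: for `y(t) = exp(tA)v₀ + Σ_{k=1}^p t^k φ_k(tA) v_k` and
all `s, τ ≥ 0`,
`y(s+τ) = exp(τA)(y(s)) + Σ_{i=1}^p τ^i φ_i(τA)(Σ_{j=0}^{p-i} (s^j/j!) v_{i+j})`. -/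
theorem phi_time_stepping_relation
    {E : Type*} [NormedAddCommGroup E] [NormedSpace ℝ E] [FiniteDimensional ℝ E]
    (A : E →L[ℝ] E) (p : ℕ) (hp : 1 ≤ p) (v : ℕ → E)
    (y : ℝ → E)
    (hy : ∀ t : ℝ, y t = NormedSpace.exp (t • A) (v 0)
        + ∑ k ∈ Finset.Icc 1 p, t ^ k • phiOp k (t • A) (v k)) :
    ∀ s τ : ℝ, 0 ≤ s → 0 ≤ τ →
      y (s + τ) = NormedSpace.exp (τ • A) (y s)
        + ∑ i ∈ Finset.Icc 1 p, τ ^ i •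
            phiOp i (τ • A)
              (∑ j ∈ Finset.range (p - i + 1), (s ^ j / (j.factorial : ℝ)) • v (i + j)) :=
  phi_time_stepping_relation_general A p v y hy
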